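/- Let G be a real symmetric (n+1)×(n+1) matrix with signature (1,n) (one positive and n negative eigenvalues), indexed from 0 to n, with g^{00} > 0. Then the n×n submatrix [g^{jk}]_{j,k=1}^n is negative definite if and only if the (0,0) entry of G^{-1} is positive. -/
import Mathlib


open Matrix

/-- A real symmetric matrix has signature (1,n) if it is congruent to diag(1,-1,...,-1). -/
def SignatureOneN {n : ℕ} (G : Matrix (Fin (n+1)) (Fin (n+1)) ℝ) : Prop :=
  ∃ B : Matrix (Fin (n+1)) (Fin (n+1)) ℝ, IsUnit B.det ∧
    Bᵀ * G * B = Matrix.diagonal (fun i => if i = 0 then (1:ℝ) else -1)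

lemma bil_symm {m : ℕ} (G : Matrix (Fin m) (Fin m) ℝ) (hsym : G.IsSymm)
    (u w : Fin m → ℝ) : u ⬝ᵥ G *ᵥ w = w ⬝ᵥ G *ᵥ u := by
  rw [Matrix.dotProduct_mulVec, ← Matrix.mulVec_transpose, hsym.eq, dotProduct_comm]

lemma chg {m : ℕ} (G B : Matrix (Fin m) (Fin m) ℝ) (a b : Fin m → ℝ) :
    (B *ᵥ a) ⬝ᵥ G *ᵥ (B *ᵥ b) = a ⬝ᵥ ((Bᵀ * G * B) *ᵥ b) := by
  rw [Matrix.mulVec_mulVec, Matrix.dotProduct_mulVec, ← Matrix.mulVec_transpose,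
    Matrix.mulVec_mulVec,
    show (G * B)ᵀ * B = (Bᵀ * G * B)ᵀ by simp [Matrix.transpose_mul, Matrix.mul_assoc],
    Matrix.mulVec_transpose, ← Matrix.dotProduct_mulVec]

lemma diagform {m : ℕ} (a b : Fin (m+1) → ℝ) :
    a ⬝ᵥ ((Matrix.diagonal (fun i : Fin (m+1) => if i = 0 then (1:ℝ) else -1)) *ᵥ b)
      = a 0 * b 0 - ∑ j : Fin m, a j.succ * b j.succ := by
  simp [Matrix.mulVec_diagonal, dotProduct, Fin.sum_univ_succ, Fin.succ_ne_zero]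
  ring

lemma key {n : ℕ} (G : Matrix (Fin (n+1)) (Fin (n+1)) ℝ)
    (B : Matrix (Fin (n+1)) (Fin (n+1)) ℝ) (hB : IsUnit B.det)
    (hD : Bᵀ * G * B = Matrix.diagonal (fun i => if i = 0 then (1:ℝ) else -1))
    (u w : Fin (n+1) → ℝ) (hu : 0 < u ⬝ᵥ G *ᵥ u) (horth : u ⬝ᵥ G *ᵥ w = 0)
    (hw : w ≠ 0) : w ⬝ᵥ G *ᵥ w < 0 := by
  have hBB : B * B⁻¹ = 1 := Matrix.mul_nonsing_inv B hB
  set x := B⁻¹ *ᵥ u with hx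
  set y := B⁻¹ *ᵥ w with hy
  have hu' : u = B *ᵥ x := by rw [hx, Matrix.mulVec_mulVec, hBB, Matrix.one_mulVec]
  have hw' : w = B *ᵥ y := by rw [hy, Matrix.mulVec_mulVec, hBB, Matrix.one_mulVec]
  have e1 : x 0 * x 0 - ∑ j : Fin n, x j.succ * x j.succ > 0 := by
    rw [← diagform, ← hD, ← chg, ← hu']; exact hu
  have e2 : x 0 * y 0 - ∑ j : Fin n, x j.succ * y j.succ = 0 := by
    rw [← diagform, ← hD, ← chg, ← hu', ← hw']; exact horth
  have e3 : w ⬝ᵥ G *ᵥ w = y 0 * y 0 - ∑ j : Fin n, y j.succ * y j.succ := by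
    rw [hw', chg, hD, diagform]
  rw [e3]
  set Sxx := ∑ j : Fin n, x j.succ * x j.succ with hSxx
  set Syy := ∑ j : Fin n, y j.succ * y j.succ with hSyy
  set Sxy := ∑ j : Fin n, x j.succ * y j.succ with hSxy
  have hCS : Sxy ^ 2 ≤ Sxx * Syy := by
    have := Finset.sum_mul_sq_le_sq_mul_sq Finset.univ (fun j : Fin n => x j.succ)
      (fun j : Fin n => y j.succ)
    simpa [hSxx, hSyy, hSxy, sq] using this
  have hSxx0 : 0 ≤ Sxx := Finset.sum_nonneg fun j _ => mul_self_nonneg _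
  have hSyy0 : 0 ≤ Syy := Finset.sum_nonneg fun j _ => mul_self_nonneg _
  by_contra hcon
  push_neg at hcon
  -- hcon : Syy ≤ y 0 * y 0
  have hy0 : y 0 ≠ 0 := by
    intro h0
    apply hw
    have hy0' : y = 0 := by
      have hS : Syy = 0 := le_antisymm (by simpa [h0] using hcon) hSyy0
      have hzero : ∀ j : Fin n, y j.succ = 0 := by
        intro j
        have := (Finset.sum_eq_zero_iff_of_nonneg
          (fun i _ => mul_self_nonneg (y i.succ))).mp hS j (Finset.mem_univ j)
        exact mul_self_eq_zero.mp this
      funext i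
      refine Fin.cases ?_ ?_ i
      · exact h0
      · exact hzero
    rw [hw', hy0', Matrix.mulVec_zero]
  have h1 : Sxy = x 0 * y 0 := by linarith
  have h3 : Sxx * Syy ≤ Sxx * (y 0 * y 0) :=
    mul_le_mul_of_nonneg_left (by linarith) hSxx0
  have h4 : Sxx * (y 0 * y 0) < (x 0 * x 0) * (y 0 * y 0) :=
    mul_lt_mul_of_pos_right (by linarith) (mul_self_pos.mpr hy0)
  have h5 : (x 0 * y 0) ^ 2 ≤ Sxx * Syy := h1 ▸ hCS
  have h6 : (x 0 * y 0) ^ 2 = (x 0 * x 0) * (y 0 * y 0) := by ring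
  linarith

lemma qcons {n : ℕ} (G : Matrix (Fin (n+1)) (Fin (n+1)) ℝ) (ξ : Fin n → ℝ) :
    (Fin.cons 0 ξ : Fin (n+1) → ℝ) ⬝ᵥ G *ᵥ (Fin.cons 0 ξ : Fin (n+1) → ℝ)
      = ∑ j, ∑ k, G j.succ k.succ * ξ j * ξ k := by
  simp only [dotProduct, Matrix.mulVec, dotProduct, Fin.sum_univ_succ, Fin.cons_zero,
    Fin.cons_succ, zero_mul, mul_zero, zero_add, add_zero]
  apply Finset.sum_congr rfl
  intro j _
  rw [Finset.mul_sum]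
  apply Finset.sum_congr rfl
  intro k _
  ring


/-- The spatial block is negative definite iff the (0,0) entry of the inverse is positive. -/
theorem stmt0 {n : ℕ} (G : Matrix (Fin (n+1)) (Fin (n+1)) ℝ)
    (hsym : G.IsSymm) (hsig : SignatureOneN G) (h00 : 0 < G 0 0) :
    (∀ ξ : Fin n → ℝ, ξ ≠ 0 → ∑ j, ∑ k, G j.succ k.succ * ξ j * ξ k < 0) ↔
      0 < G⁻¹ 0 0 := by
  obtain ⟨B, hB, hD⟩ := hsig
  -- G is invertible
  have hGdet : IsUnit G.det := by
    have h1 : (Bᵀ * G * B).det = (Matrix.diagonal fun i : Fin (n+1) =>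
        if i = 0 then (1:ℝ) else -1).det := by rw [hD]
    rw [Matrix.det_mul, Matrix.det_mul, Matrix.det_transpose, Matrix.det_diagonal] at h1
    refine isUnit_iff_ne_zero.mpr fun h0 => ?_
    rw [h0, mul_zero, zero_mul] at h1
    have : (∏ i : Fin (n+1), if i = 0 then (1:ℝ) else -1) ≠ 0 :=
      Finset.prod_ne_zero_iff.mpr fun i _ => by split <;> norm_num
    exact this h1.symm
  have hGG : G * G⁻¹ = 1 := Matrix.mul_nonsing_inv G hGdet
  set e₀ : Fin (n+1) → ℝ := Pi.single 0 1 with he₀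
  set u : Fin (n+1) → ℝ := G⁻¹ *ᵥ e₀ with hudef
  have hGu : G *ᵥ u = e₀ := by
    rw [hudef, Matrix.mulVec_mulVec, hGG, Matrix.one_mulVec]
  have hu0 : u 0 = G⁻¹ 0 0 := by simp [hudef, he₀, Matrix.mulVec_single]
  have hqu : u ⬝ᵥ G *ᵥ u = G⁻¹ 0 0 := by
    rw [hGu, he₀, dotProduct_single, mul_one, hu0]
  have horthgen : ∀ w : Fin (n+1) → ℝ, w 0 = 0 → w ⬝ᵥ G *ᵥ u = 0 := by
    intro w hw0
    rw [hGu, he₀, dotProduct_single, mul_one, hw0]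
  constructor
  · intro h
    by_contra hcon
    push_neg at hcon
    rcases lt_or_eq_of_le hcon with hneg | hz
    · -- G⁻¹ 0 0 < 0
      set a : ℝ := 1 / G⁻¹ 0 0 with ha
      set w : Fin (n+1) → ℝ := e₀ - a • u with hwdef
      have hw0 : w 0 = 0 := by
        have h1 : w 0 = 1 - a * (G⁻¹ 0 0) := by
          rw [hwdef]
          simp only [Pi.sub_apply, Pi.smul_apply, smul_eq_mul, he₀, hu0]
          norm_num
        rw [h1, ha, one_div, inv_mul_cancel₀ (ne_of_lt hneg), sub_self]
      have hwcons : w = Fin.cons 0 (Fin.tail w) := by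
        rw [← hw0]; exact (Fin.cons_self_tail w).symm
      have hqw : w ⬝ᵥ G *ᵥ w ≤ 0 := by
        rw [hwcons, qcons]
        rcases eq_or_ne (Fin.tail w) 0 with ht | ht
        · rw [ht]; simp
        · exact le_of_lt (h _ ht)
      have hexp : e₀ ⬝ᵥ G *ᵥ e₀
          = a * a * (u ⬝ᵥ G *ᵥ u) + a * (u ⬝ᵥ G *ᵥ w) + a * (w ⬝ᵥ G *ᵥ u)
            + w ⬝ᵥ G *ᵥ w := by
        have : e₀ = a • u + w := by rw [hwdef]; abel
        rw [this]
        simp [Matrix.mulVec_add, Matrix.mulVec_smul, dotProduct_add, add_dotProduct,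
          smul_dotProduct, dotProduct_smul, smul_eq_mul]
        ring
      have hq0 : e₀ ⬝ᵥ G *ᵥ e₀ = G 0 0 := by
        simp [he₀, Matrix.mulVec_single, dotProduct_single]
      have hcross1 : w ⬝ᵥ G *ᵥ u = 0 := horthgen w hw0
      have hcross2 : u ⬝ᵥ G *ᵥ w = 0 := by rw [bil_symm G hsym]; exact hcross1
      have : G 0 0 ≤ a * a * G⁻¹ 0 0 := by
        rw [← hq0, hexp, hcross1, hcross2, hqu]; linarith
      have haneg : a * a * G⁻¹ 0 0 < 0 := by
        have ha0 : a ≠ 0 := by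
          rw [ha]; exact one_div_ne_zero (ne_of_lt hneg)
        exact mul_neg_of_pos_of_neg (mul_self_pos.mpr ha0) hneg
      linarith
    · -- G⁻¹ 0 0 = 0
      have hu0' : u 0 = 0 := by rw [hu0, ← hz]
      have hune : u ≠ 0 := by
        intro h0
        rw [h0, Matrix.mulVec_zero] at hGu
        have := congrFun hGu 0
        simp [he₀] at this
      have htne : Fin.tail u ≠ 0 := by
        intro ht
        apply hune
        funext i
        refine Fin.cases ?_ ?_ i
        · exact hu0'
        · intro j; exact congrFun ht j
      have := h (Fin.tail u) htne
      rw [← qcons] at this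
      rw [show (Fin.cons 0 (Fin.tail u) : Fin (n+1) → ℝ) = u by
        rw [← hu0']; exact Fin.cons_self_tail u] at this
      rw [hqu, hz] at this
      exact lt_irrefl 0 this
  · intro hpos ξ hξ
    set w : Fin (n+1) → ℝ := Fin.cons 0 ξ with hwdef
    have hwne : w ≠ 0 := by
      intro h0
      apply hξ
      funext j
      have := congrFun h0 j.succ
      simpa [hwdef] using this
    have horth : u ⬝ᵥ G *ᵥ w = 0 := by
      rw [bil_symm G hsym]
      exact horthgen w (by simp [hwdef])
    have := key G B hB hD u w (by rw [hqu]; exact hpos) horth hwne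
    rwa [hwdef, qcons] at this
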